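/- Let τ ∈ {1,2}, let T : L²(Ω) → L²(Ω) be bounded linear with T 1_Ω = 1_Ω, let g ∈ L²(Ω) and ν_τ > 0 with ν_τ|Ω| ≤ ‖g − g_Ω‖_{L^τ(Ω)}^τ, and assume the inequality-constrained problem min { TV(u) : u ∈ L²(Ω), TV(u) < ∞, H_τ(u;g) ≤ B_τ } admits a solution. Then the equality-constrained problem min { TV(u) : u ∈ L²(Ω), TV(u) < ∞, H_τ(u;g) = B_τ } also admits a solution, and the two problems are equivalent in the sense that inf { TV(u) : H_τ(u;g) ≤ B_τ } = inf { TV(u) : H_τ(u;g) = B_τ }. -/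

import Mathlib

open MeasureTheory Filter
open scoped ENNReal NNReal

noncomputable section

abbrev E2 : Type := EuclideanSpace ℝ (Fin 2)

abbrev μΩ (Ω : Set E2) : Measure E2 := MeasureTheory.volume.restrict Ω

abbrev LpΩ (Ω : Set E2) := Lp ℝ 2 (μΩ Ω)

/-- Discrete divergence of a C¹ vector field. -/
def divg (ξ : E2 → E2) (x : E2) : ℝ :=
  ∑ i : Fin 2, fderiv ℝ ξ x (EuclideanSpace.single i 1) i

/-- Admissible test vector fields for the total variation. -/
def IsTestField (Ω : Set E2) (ξ : E2 → E2) : Prop :=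
  ContDiff ℝ 1 ξ ∧ HasCompactSupport ξ ∧ tsupport ξ ⊆ Ω ∧ ∀ x, ‖ξ x‖ ≤ 1

/-- Total variation of `u ∈ L²(Ω)` (valued in `ℝ≥0∞`). -/
def TV (Ω : Set E2) (u : LpΩ Ω) : ℝ≥0∞ :=
  ⨆ ξ : {ξ : E2 → E2 // IsTestField Ω ξ},
    ENNReal.ofReal (∫ x, u x * divg ξ.1 x ∂(μΩ Ω))

/-- Fidelity term `H_τ(u;g) = (1/τ)‖Tu - g‖_{L^τ}^τ`. -/
def Hfid (Ω : Set E2) (τ : ℕ) (T : LpΩ Ω →L[ℝ] LpΩ Ω) (g u : LpΩ Ω) : ℝ :=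
  (1 / (τ : ℝ)) * ∫ x, |(T u - g : LpΩ Ω) x| ^ τ ∂(μΩ Ω)

/-- The functional `J_τ(u,α) = H_τ(u;g) + α · TV(u)` (valued in `ℝ≥0∞`). -/
def Jfun (Ω : Set E2) (τ : ℕ) (T : LpΩ Ω →L[ℝ] LpΩ Ω) (g : LpΩ Ω) (α : ℝ)
    (u : LpΩ Ω) : ℝ≥0∞ :=
  ENNReal.ofReal (Hfid Ω τ T g u) + ENNReal.ofReal α * TV Ω u

/-- The mean value `g_Ω` of `g` over `Ω`. -/
def meanG (Ω : Set E2) (g : LpΩ Ω) : ℝ :=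
  (∫ x, g x ∂(μΩ Ω)) / (MeasureTheory.volume Ω).toReal

/-- `‖g - g_Ω‖_{L^τ(Ω)}^τ`. -/
def gMeanDist (Ω : Set E2) (τ : ℕ) (g : LpΩ Ω) : ℝ :=
  ∫ x, |g x - meanG Ω g| ^ τ ∂(μΩ Ω)

/-- `B_τ = (ν_τ/τ)|Ω|`. -/
def Bval (Ω : Set E2) (τ : ℕ) (ν : ℝ) : ℝ :=
  (ν / (τ : ℝ)) * (MeasureTheory.volume Ω).toReal

/-- `o` represents the constant function `1_Ω` in `L²(Ω)`. -/
def IsOneFun (Ω : Set E2) (o : LpΩ Ω) : Prop :=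
  ∀ᵐ x ∂(μΩ Ω), o x = 1

/-- `u` minimizes `J_τ(·,α)` over `{TV < ∞}`. -/
def IsJMin (Ω : Set E2) (τ : ℕ) (T : LpΩ Ω →L[ℝ] LpΩ Ω) (g : LpΩ Ω) (α : ℝ)
    (u : LpΩ Ω) : Prop :=
  TV Ω u < ⊤ ∧ ∀ v, TV Ω v < ⊤ → Jfun Ω τ T g α u ≤ Jfun Ω τ T g α v

/-!
Let `u*` solve the inequality-constrained problem and move along the segment
`w t = (1 - t) u* + t g_Ω 1_Ω`. Since `∫ div ξ = 0` for every test field, `TV` ignores added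
constants, and it is positively homogeneous, so `TV (w t) ≤ TV u*`. Since `T` fixes constants,
`H_τ (w 1) = ‖g - g_Ω‖^τ / τ ≥ B_τ`, while `H_τ (w 0) ≤ B_τ`; `t ↦ H_τ (w t)` is continuous by
dominated convergence (here `τ ≤ 2` and `|Ω| < ∞` give `L² ⊆ L^τ`). The intermediate value
theorem yields `t` with `H_τ (w t) = B_τ`, and `w t` then solves both problems.
-/

theorem integral_fderiv_apply_eq_zero {E F : Type*} [NormedAddCommGroup E] [NormedSpace ℝ E]
    [FiniteDimensional ℝ E] [MeasurableSpace E] [BorelSpace E] {μ : Measure E}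
    [μ.IsAddHaarMeasure] [NormedAddCommGroup F] [NormedSpace ℝ F] {ξ : E → F}
    (hξ : ContDiff ℝ 1 ξ) (hcs : HasCompactSupport ξ) (v : E) :
    ∫ x, fderiv ℝ ξ x v ∂μ = 0 := by
  have hD : Continuous fun x => fderiv ℝ ξ x v :=
    (hξ.continuous_fderiv one_ne_zero).clm_apply continuous_const
  simpa using integral_smul_fderiv_eq_neg_fderiv_smul_of_integrable (μ := μ)
    (f := fun _ => (1 : ℝ)) (g := ξ) (v := v) (by simp)
    (by simpa using hD.integrable_of_hasCompactSupport (hcs.fderiv_apply ℝ v))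
    (by simpa using hξ.continuous.integrable_of_hasCompactSupport hcs)
    (fun x _ => differentiableAt_const _) (fun x _ => (hξ.differentiable one_ne_zero) x)

theorem continuous_divg {ξ : E2 → E2} (hξ : ContDiff ℝ 1 ξ) : Continuous (divg ξ) :=
  continuous_finsetSum _ fun i _ => (EuclideanSpace.proj i).continuous.comp
    ((hξ.continuous_fderiv one_ne_zero).clm_apply continuous_const)

theorem HasCompactSupport.divg {ξ : E2 → E2} (hcs : HasCompactSupport ξ) :
    HasCompactSupport (divg ξ) :=
  hcs.fderiv ℝ |>.comp_left (g := fun L : E2 →L[ℝ] E2 => ∑ i, L (EuclideanSpace.single i 1) i)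
    (by simp)

theorem integral_divg_eq_zero {ξ : E2 → E2} (hξ : ContDiff ℝ 1 ξ) (hcs : HasCompactSupport ξ) :
    ∫ x, divg ξ x = 0 := by
  have hD : ∀ i, Integrable (fun x => fderiv ℝ ξ x (EuclideanSpace.single i 1)) :=
    fun i => ((hξ.continuous_fderiv one_ne_zero).clm_apply continuous_const)
      |>.integrable_of_hasCompactSupport (hcs.fderiv_apply ℝ _)
  have hcomp : ∀ i, ∫ x, fderiv ℝ ξ x (EuclideanSpace.single i 1) i = 0 := fun i => by
    simpa [integral_fderiv_apply_eq_zero hξ hcs] using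
      (EuclideanSpace.proj i : E2 →L[ℝ] ℝ).integral_comp_comm (hD i)
  simp only [divg]
  rw [integral_finsetSum _ fun i _ => by
    simpa using (EuclideanSpace.proj i : E2 →L[ℝ] ℝ).integrable_comp (hD i)]
  simp [hcomp]

theorem divg_eq_zero_of_notMem_tsupport {ξ : E2 → E2} {x : E2} (hx : x ∉ tsupport ξ) :
    divg ξ x = 0 := by
  simp [divg, Function.notMem_support.mp fun h => hx (support_fderiv_subset ℝ h)]

namespace IsTestField

variable {Ω : Set E2} {ξ : E2 → E2}

theorem memLp_divg (hξ : IsTestField Ω ξ) (p : ℝ≥0∞) : MemLp (divg ξ) p (μΩ Ω) :=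
  (continuous_divg hξ.1).memLp_of_hasCompactSupport hξ.2.1.divg |>.restrict Ω

theorem setIntegral_divg_eq_zero (hξ : IsTestField Ω ξ) : ∫ x, divg ξ x ∂(μΩ Ω) = 0 := by
  rw [setIntegral_eq_integral_of_forall_compl_eq_zero
    fun x hx => divg_eq_zero_of_notMem_tsupport fun h => hx (hξ.2.2.1 h)]
  exact integral_divg_eq_zero hξ.1 hξ.2.1

end IsTestField

section TotalVariation

variable {Ω : Set E2} {o : LpΩ Ω}

theorem integral_add_smul_one_mul_divg (ho : IsOneFun Ω o) {ξ : E2 → E2}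
    (hξ : IsTestField Ω ξ) (u : LpΩ Ω) (c : ℝ) :
    ∫ x, (u + c • o : LpΩ Ω) x * divg ξ x ∂(μΩ Ω) = ∫ x, u x * divg ξ x ∂(μΩ Ω) := by
  have hu : Integrable (fun x => u x * divg ξ x) (μΩ Ω) :=
    (Lp.memLp u).integrable_mul (hξ.memLp_divg 2)
  have hd : Integrable (divg ξ) (μΩ Ω) := memLp_one_iff_integrable.1 (hξ.memLp_divg 1)
  calc ∫ x, (u + c • o : LpΩ Ω) x * divg ξ x ∂(μΩ Ω)
      = ∫ x, (u x * divg ξ x + c * divg ξ x) ∂(μΩ Ω) := by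
        refine integral_congr_ae ?_
        filter_upwards [Lp.coeFn_add u (c • o), Lp.coeFn_smul c o, ho] with x hadd hsmul hx
        rw [hadd, Pi.add_apply, hsmul, Pi.smul_apply, hx, smul_eq_mul, mul_one, add_mul]
    _ = ∫ x, u x * divg ξ x ∂(μΩ Ω) := by
        rw [integral_add hu (hd.const_mul c), integral_const_mul, hξ.setIntegral_divg_eq_zero,
          mul_zero, add_zero]

theorem TV_add_smul_one (ho : IsOneFun Ω o) (u : LpΩ Ω) (c : ℝ) :
    TV Ω (u + c • o) = TV Ω u :=
  iSup_congr fun ξ => by rw [integral_add_smul_one_mul_divg ho ξ.2]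

theorem TV_smul (u : LpΩ Ω) {a : ℝ} (ha : 0 ≤ a) :
    TV Ω (a • u) = ENNReal.ofReal a * TV Ω u := by
  rw [TV, TV, ENNReal.mul_iSup]
  refine iSup_congr fun ξ => ?_
  rw [← ENNReal.ofReal_mul ha, ← integral_const_mul]
  refine congrArg ENNReal.ofReal (integral_congr_ae ?_)
  filter_upwards [Lp.coeFn_smul a u] with x hx
  simp [hx, mul_assoc]

theorem TV_segment_smul_one_le (ho : IsOneFun Ω o) (u : LpΩ Ω) (c : ℝ) {t : ℝ}
    (ht₀ : 0 ≤ t) (ht₁ : t ≤ 1) :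
    TV Ω ((1 - t) • u + t • (c • o)) ≤ TV Ω u := by
  rw [smul_smul, TV_add_smul_one ho, TV_smul u (sub_nonneg.2 ht₁)]
  exact mul_le_of_le_one_left' (ENNReal.ofReal_le_one.2 (by linarith))

end TotalVariation

theorem continuous_integral_abs_add_mul_pow {α : Type*} [MeasurableSpace α] {μ : Measure α}
    {f g : α → ℝ} {p : ℕ} (hp : p ≠ 0) (hf : MemLp f p μ) (hg : MemLp g p μ) :
    Continuous fun t : ℝ => ∫ x, |f x + t * g x| ^ p ∂μ := by
  refine continuous_iff_continuousAt.2 fun t₀ => ?_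
  set C := |t₀| + 1
  have hbound : Integrable (fun x => (|f x| + C * |g x|) ^ p) μ := by
    have := (hf.norm.add (hg.norm.const_mul C)).integrable_norm_pow hp
    refine this.congr (Eventually.of_forall fun x => ?_)
    simp only [Pi.add_apply, Real.norm_eq_abs]
    rw [abs_of_nonneg (by positivity)]
  refine continuousAt_of_dominated (bound := fun x => (|f x| + C * |g x|) ^ p)
    (Eventually.of_forall fun t => ?_) ?_ hbound (Eventually.of_forall fun x => by fun_prop)
  · exact ((hf.1.add (hg.1.const_mul t)).norm.pow p).congr (Eventually.of_forall fun _ => rfl)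
  filter_upwards [Metric.ball_mem_nhds t₀ one_pos] with t ht
  refine Eventually.of_forall fun x => ?_
  have htC : |t| ≤ C := by
    have := abs_sub_abs_le_abs_sub t t₀
    rw [Metric.mem_ball, Real.dist_eq] at ht
    linarith
  rw [Real.norm_eq_abs, abs_pow, abs_abs]
  refine pow_le_pow_left₀ (abs_nonneg _) ?_ p
  calc |f x + t * g x| ≤ |f x| + |t| * |g x| := (abs_add_le _ _).trans_eq (by rw [abs_mul])
    _ ≤ |f x| + C * |g x| := by gcongr

section Fidelity

variable {Ω : Set E2} {τ : ℕ} (T : LpΩ Ω →L[ℝ] LpΩ Ω) (g : LpΩ Ω)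

theorem Hfid_segment (u v : LpΩ Ω) (t : ℝ) :
    Hfid Ω τ T g ((1 - t) • u + t • v) =
      1 / τ * ∫ x, |(T u - g : LpΩ Ω) x + t * (T v - T u : LpΩ Ω) x| ^ τ ∂(μΩ Ω) := by
  have hT : T ((1 - t) • u + t • v) - g = (T u - g) + t • (T v - T u) := by
    rw [map_add, map_smul, map_smul]
    module
  rw [Hfid, hT]
  congr 1
  refine integral_congr_ae ?_
  filter_upwards [Lp.coeFn_add (T u - g) (t • (T v - T u)), Lp.coeFn_smul t (T v - T u)]
    with x hadd hsmul
  rw [hadd, Pi.add_apply, hsmul, Pi.smul_apply, smul_eq_mul]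

theorem continuous_Hfid_segment [IsFiniteMeasure (μΩ Ω)] (hτ₀ : τ ≠ 0) (hτ₂ : τ ≤ 2)
    (u v : LpΩ Ω) : Continuous fun t : ℝ => Hfid Ω τ T g ((1 - t) • u + t • v) := by
  have hle : (τ : ℝ≥0∞) ≤ 2 := by exact_mod_cast hτ₂
  simp_rw [Hfid_segment]
  exact continuous_const.mul <| continuous_integral_abs_add_mul_pow hτ₀
    ((Lp.memLp _).mono_exponent hle) ((Lp.memLp _).mono_exponent hle)

theorem Hfid_smul_one {o : LpΩ Ω} (ho : IsOneFun Ω o) (hTo : T o = o) (c : ℝ) :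
    Hfid Ω τ T g (c • o) = 1 / τ * ∫ x, |g x - c| ^ τ ∂(μΩ Ω) := by
  rw [Hfid, map_smul, hTo]
  congr 1
  refine integral_congr_ae ?_
  filter_upwards [Lp.coeFn_sub (c • o) g, Lp.coeFn_smul c o, ho] with x hsub hsmul hx
  rw [hsub, Pi.sub_apply, hsmul, Pi.smul_apply, hx, smul_eq_mul, mul_one, abs_sub_comm]

end Fidelity

theorem stmt1_general (Ω : Set E2) (hΩb : Bornology.IsBounded Ω)
    (τ : ℕ) (hτ : τ = 1 ∨ τ = 2)
    (T : LpΩ Ω →L[ℝ] LpΩ Ω) (g : LpΩ Ω) (ν : ℝ)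
    (o : LpΩ Ω) (ho : IsOneFun Ω o) (hTo : T o = o)
    (hνg : ν * (MeasureTheory.volume Ω).toReal ≤ gMeanDist Ω τ g)
    (hineq : ∃ us : LpΩ Ω, TV Ω us < ⊤ ∧ Hfid Ω τ T g us ≤ Bval Ω τ ν ∧
      ∀ u : LpΩ Ω, TV Ω u < ⊤ → Hfid Ω τ T g u ≤ Bval Ω τ ν → TV Ω us ≤ TV Ω u) :
    (∃ ue : LpΩ Ω, TV Ω ue < ⊤ ∧ Hfid Ω τ T g ue = Bval Ω τ ν ∧
      ∀ u : LpΩ Ω, TV Ω u < ⊤ → Hfid Ω τ T g u = Bval Ω τ ν → TV Ω ue ≤ TV Ω u) ∧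
    (⨅ u : {u : LpΩ Ω // TV Ω u < ⊤ ∧ Hfid Ω τ T g u ≤ Bval Ω τ ν}, TV Ω u.1) =
      (⨅ u : {u : LpΩ Ω // TV Ω u < ⊤ ∧ Hfid Ω τ T g u = Bval Ω τ ν}, TV Ω u.1) := by
  have : IsFiniteMeasure (μΩ Ω) := isFiniteMeasure_restrict.2 hΩb.measure_lt_top.ne
  obtain ⟨us, hus_fin, hus_H, hus_min⟩ := hineq
  set w : ℝ → LpΩ Ω := fun t => (1 - t) • us + t • (meanG Ω g • o)
  have hB : Bval Ω τ ν ≤ Hfid Ω τ T g (w 1) := by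
    simp only [w, sub_self, zero_smul, one_smul, zero_add]
    rw [Hfid_smul_one T g ho hTo]
    calc Bval Ω τ ν = 1 / τ * (ν * (MeasureTheory.volume Ω).toReal) := by rw [Bval]; ring
      _ ≤ 1 / τ * gMeanDist Ω τ g := by gcongr
  obtain ⟨t, ht, hHt⟩ := intermediate_value_Icc zero_le_one
    (continuous_Hfid_segment T g (by omega) (by omega) us _).continuousOn
    ⟨by simpa [w] using hus_H, hB⟩
  have hTV : TV Ω (w t) ≤ TV Ω us := TV_segment_smul_one_le ho us _ ht.1 ht.2
  have hfin : TV Ω (w t) < ⊤ := hTV.trans_lt hus_fin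
  have hmin : IsMinOn (TV Ω) {u | TV Ω u < ⊤ ∧ Hfid Ω τ T g u ≤ Bval Ω τ ν} (w t) :=
    isMinOn_iff.2 fun u hu => hTV.trans (hus_min u hu.1 hu.2)
  have hmin_eq : IsMinOn (TV Ω) {u | TV Ω u < ⊤ ∧ Hfid Ω τ T g u = Bval Ω τ ν} (w t) :=
    hmin.on_subset fun u hu => ⟨hu.1, hu.2.le⟩
  refine ⟨⟨w t, hfin, hHt, fun u hu hHu => isMinOn_iff.1 hmin_eq u ⟨hu, hHu⟩⟩, ?_⟩
  exact (hmin.iInf_eq (by exact ⟨hfin, hHt.le⟩)).trans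
    (hmin_eq.iInf_eq (by exact ⟨hfin, hHt⟩)).symm

/-- If `T 1_Ω = 1_Ω`, `ν_τ|Ω| ≤ ‖g - g_Ω‖_{L^τ}^τ` and the
inequality-constrained problem admits a solution, then the equality-constrained problem
admits a solution and both problems have the same optimal value. -/
theorem stmt1 (Ω : Set E2) (hΩo : IsOpen Ω) (hΩb : Bornology.IsBounded Ω)
    (hΩpos : 0 < MeasureTheory.volume Ω)
    (τ : ℕ) (hτ : τ = 1 ∨ τ = 2)
    (T : LpΩ Ω →L[ℝ] LpΩ Ω) (g : LpΩ Ω) (ν : ℝ) (hν : 0 < ν)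
    (o : LpΩ Ω) (ho : IsOneFun Ω o) (hTo : T o = o)
    (hνg : ν * (MeasureTheory.volume Ω).toReal ≤ gMeanDist Ω τ g)
    (hineq : ∃ us : LpΩ Ω, TV Ω us < ⊤ ∧ Hfid Ω τ T g us ≤ Bval Ω τ ν ∧
      ∀ u : LpΩ Ω, TV Ω u < ⊤ → Hfid Ω τ T g u ≤ Bval Ω τ ν → TV Ω us ≤ TV Ω u) :
    (∃ ue : LpΩ Ω, TV Ω ue < ⊤ ∧ Hfid Ω τ T g ue = Bval Ω τ ν ∧
      ∀ u : LpΩ Ω, TV Ω u < ⊤ → Hfid Ω τ T g u = Bval Ω τ ν → TV Ω ue ≤ TV Ω u) ∧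
    (⨅ u : {u : LpΩ Ω // TV Ω u < ⊤ ∧ Hfid Ω τ T g u ≤ Bval Ω τ ν}, TV Ω u.1) =
      (⨅ u : {u : LpΩ Ω // TV Ω u < ⊤ ∧ Hfid Ω τ T g u = Bval Ω τ ν}, TV Ω u.1) :=
  stmt1_general Ω hΩb τ hτ T g ν o ho hTo hνg hineq

end
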